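/- Let Δ : Y × Y → ℝ be SELF, i.e., Δ(y,y') = ⟨ψ(y), V ψ(y')⟩_H with ψ continuous and V bounded linear, and let ρ be a probability measure on X × Y with Y compact. Then the expected risk of any measurable f : X → Y satisfies E(f) = ∫_X ⟨ψ(f(x)), V g*(x)⟩_H dρ_X(x), where g*(x) = ∫_Y ψ(y) dρ(y|x), and hence any measurable f* with f*(x) ∈ argmin_{y∈Y} ⟨ψ(y), V g*(x)⟩ for ρ_X-a.e. x minimizes the expected risk E(f) = ∫ Δ(f(x), y) dρ(x,y). -/
import Mathlib


open MeasureTheory ProbabilityTheory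
open scoped RealInnerProductSpace

/-- Let `Δ(y,y') = ⟪ψ(y), V ψ(y')⟫` be SELF (with `ψ` continuous and
`V` bounded linear) and `ρ = ρ_X ⊗ κ` a probability measure on `X × Y` with `Y`
compact.  Then for every measurable `f : X → Y` the expected risk satisfies
`E(f) = ∫_X ⟪ψ(f(x)), V g*(x)⟫ dρ_X(x)` where `g*(x) = ∫ ψ(y) dρ(y|x)`; hence any
measurable `f*` with `f*(x) ∈ argmin_y ⟪ψ(y), V g*(x)⟫` for `ρ_X`-a.e. `x` minimizes
the expected risk `E(f) = ∫ Δ(f(x), y) dρ(x,y)` over measurable `f`. -/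
theorem self_risk_decomposition_and_minimizer
    {X Y H : Type*} [MeasurableSpace X]
    [MeasurableSpace Y] [TopologicalSpace Y] [CompactSpace Y] [BorelSpace Y]
    [NormedAddCommGroup H] [InnerProductSpace ℝ H] [CompleteSpace H]
    [SecondCountableTopology H] [MeasurableSpace H] [BorelSpace H]
    (ρX : Measure X) [IsProbabilityMeasure ρX]
    (κ : Kernel X Y) [IsMarkovKernel κ]
    (ψ : Y → H) (hψ : Continuous ψ) (V : H →L[ℝ] H)
    (Δ : Y → Y → ℝ) (hΔ : ∀ y y', Δ y y' = ⟪ψ y, V (ψ y')⟫)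
    (gstar : X → H) (hgstar : ∀ x, gstar x = ∫ y, ψ y ∂(κ x)) :
    (∀ f : X → Y, Measurable f →
      ∫ p, Δ (f p.1) p.2 ∂(ρX.compProd κ) = ∫ x, ⟪ψ (f x), V (gstar x)⟫ ∂ρX) ∧
    (∀ fstar : X → Y, Measurable fstar →
      (∀ᵐ x ∂ρX, ∀ y : Y, ⟪ψ (fstar x), V (gstar x)⟫ ≤ ⟪ψ y, V (gstar x)⟫) →
      (∀ f : X → Y, Measurable f →
        ∫ p, Δ (fstar p.1) p.2 ∂(ρX.compProd κ) ≤
          ∫ p, Δ (f p.1) p.2 ∂(ρX.compProd κ))) := by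

  -- a uniform bound on `ψ`
  obtain ⟨C0, hC0⟩ : ∃ C, ∀ y, ‖ψ y‖ ≤ C := by
    obtain ⟨C, hC⟩ := (isCompact_range (hψ.norm)).bddAbove
    exact ⟨C, fun y => hC ⟨y, rfl⟩⟩
  set C : ℝ := max C0 0 with hCdef
  have hC : ∀ y, ‖ψ y‖ ≤ C := fun y => (hC0 y).trans (le_max_left _ _)
  have hCnn : 0 ≤ C := le_max_right _ _
  -- integrability of ψ wrt each κ x
  have hψint : ∀ x, Integrable (fun y => ψ y) (κ x) := fun x =>
    (integrable_const C).mono' (hψ.aestronglyMeasurable)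
      (Filter.Eventually.of_forall fun y => hC y)
  have hgbound : ∀ x, ‖gstar x‖ ≤ C := by
    intro x
    rw [hgstar]
    calc ‖∫ y, ψ y ∂(κ x)‖ ≤ C * ((κ x) Set.univ).toReal :=
          norm_integral_le_of_norm_le_const (Filter.Eventually.of_forall hC)
      _ = C := by simp
  -- measurability of gstar
  have hgmeas : StronglyMeasurable gstar := by
    have : StronglyMeasurable fun x => ∫ y, ψ y ∂(κ x) :=
      (hψ.stronglyMeasurable.comp_measurable measurable_snd
        : StronglyMeasurable fun p : X × Y => ψ p.2).integral_kernel_prod_right'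
    simpa [funext hgstar] using this
  -- integrability on the product measure
  have hint : ∀ f : X → Y, Measurable f →
      Integrable (fun p : X × Y => ⟪ψ (f p.1), V (ψ p.2)⟫) (ρX.compProd κ) := by
    intro f hf
    have hm : Measurable fun p : X × Y => ⟪ψ (f p.1), V (ψ p.2)⟫ :=
      (hψ.measurable.comp (hf.comp measurable_fst)).inner
        ((V.continuous.measurable.comp (hψ.measurable.comp measurable_snd)))
    refine (integrable_const (C * (‖V‖ * C))).mono' hm.aestronglyMeasurable
      (Filter.Eventually.of_forall fun p => ?_)
    calc ‖⟪ψ (f p.1), V (ψ p.2)⟫‖ ≤ ‖ψ (f p.1)‖ * ‖V (ψ p.2)‖ :=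
          norm_inner_le_norm _ _
      _ ≤ C * (‖V‖ * C) := by
          refine mul_le_mul (hC _) ((V.le_opNorm _).trans ?_) (norm_nonneg _) hCnn
          exact mul_le_mul_of_nonneg_left (hC _) (norm_nonneg V)
  -- the key identity
  have key : ∀ f : X → Y, Measurable f →
      ∫ p, Δ (f p.1) p.2 ∂(ρX.compProd κ) = ∫ x, ⟪ψ (f x), V (gstar x)⟫ ∂ρX := by
    intro f hf
    have h1 : ∫ p, Δ (f p.1) p.2 ∂(ρX.compProd κ)
        = ∫ p, ⟪ψ (f p.1), V (ψ p.2)⟫ ∂(ρX.compProd κ) := by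
      simp only [hΔ]
    rw [h1, MeasureTheory.Measure.integral_compProd (hint f hf)]
    refine integral_congr_ae (Filter.Eventually.of_forall fun x => ?_)
    have hVint : Integrable (fun y => V (ψ y)) (κ x) := (V.integrable_comp (hψint x))
    calc ∫ y, ⟪ψ (f x), V (ψ y)⟫ ∂(κ x) = ⟪ψ (f x), ∫ y, V (ψ y) ∂(κ x)⟫ :=
          integral_inner hVint _
      _ = ⟪ψ (f x), V (gstar x)⟫ := by
          rw [V.integral_comp_comm (hψint x), hgstar]
  refine ⟨key, ?_⟩
  intro fstar hfstar hopt f hf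
  rw [key fstar hfstar, key f hf]
  have hintX : ∀ g : X → Y, Measurable g →
      Integrable (fun x => ⟪ψ (g x), V (gstar x)⟫) ρX := by
    intro g hg
    have hm : Measurable fun x => ⟪ψ (g x), V (gstar x)⟫ :=
      (hψ.measurable.comp hg).inner (V.continuous.measurable.comp hgmeas.measurable)
    refine (integrable_const (C * (‖V‖ * C))).mono' hm.aestronglyMeasurable
      (Filter.Eventually.of_forall fun x => ?_)
    calc ‖⟪ψ (g x), V (gstar x)⟫‖ ≤ ‖ψ (g x)‖ * ‖V (gstar x)‖ := norm_inner_le_norm _ _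
      _ ≤ C * (‖V‖ * C) := by
          refine mul_le_mul (hC _) ((V.le_opNorm _).trans ?_) (norm_nonneg _) hCnn
          exact mul_le_mul_of_nonneg_left (hgbound x) (norm_nonneg V)
  exact integral_mono_ae (hintX fstar hfstar) (hintX f hf)
    (hopt.mono fun x hx => hx (f x))
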